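/- Let (X,d) be a metric space, (x_k) a sequence in X, and suppose δ_{A^I} satisfies property AP A^I O. If (x_k) is A^I-statistically convergent to some L ∈ X, then (x_k) has a Cauchy subsequence; indeed there is an infinite set M ⊆ ℕ with δ_{A^I}(M) = 1 such that the subsequence of (x_k) indexed by M is Cauchy (paper's Corollary 3.1). -/
import Mathlib


open Filter Topology

/-- `A` is a nonnegative regular summability matrix. -/
structure RegularMatrix (A : ℕ → ℕ → ℝ) : Prop where
  nonneg : ∀ n k, 0 ≤ A n k
  summable : ∀ n, Summable (A n)
  bounded : ∃ C : ℝ, ∀ n, (∑' k, |A n k|) ≤ C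
  col_lim : ∀ k, Tendsto (fun n => A n k) atTop (𝓝 0)
  row_sum : Tendsto (fun n => ∑' k, A n k) atTop (𝓝 1)

/-- `I` is a non-trivial admissible ideal on ℕ. -/
structure AdmissibleIdeal (I : Set (Set ℕ)) : Prop where
  union_mem : ∀ {a b : Set ℕ}, a ∈ I → b ∈ I → a ∪ b ∈ I
  subset_mem : ∀ {a b : Set ℕ}, a ∈ I → b ⊆ a → b ∈ I
  finite_mem : ∀ {s : Set ℕ}, s.Finite → s ∈ I
  univ_not_mem : Set.univ ∉ I

/-- `I`-limit of a real sequence. -/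
def ILim (I : Set (Set ℕ)) (t : ℕ → ℝ) (L : ℝ) : Prop :=
  ∀ ε > 0, {n : ℕ | ε ≤ |t n - L|} ∈ I

/-- The set `M ⊆ ℕ` has `A^I`-density `δ`, i.e. `I-lim_n Σ_{k∈M} a_{nk} = δ`. -/
def AIDensity (I : Set (Set ℕ)) (A : ℕ → ℕ → ℝ) (M : Set ℕ) (δ : ℝ) : Prop :=
  ILim I (fun n => ∑' k, M.indicator (A n) k) δ

/-- `x` is `A^I`-statistically convergent to `L`. -/
def AIStatConv {X : Type*} [MetricSpace X] (I : Set (Set ℕ)) (A : ℕ → ℕ → ℝ)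
    (x : ℕ → X) (L : X) : Prop :=
  ∀ ε > 0, AIDensity I A {k : ℕ | ε ≤ dist (x k) L} 0

/-- `x` is `A^I`-statistically Cauchy. -/
def AIStatCauchy {X : Type*} [MetricSpace X] (I : Set (Set ℕ)) (A : ℕ → ℕ → ℝ)
    (x : ℕ → X) : Prop :=
  ∀ γ > 0, ∃ k₀ : ℕ, AIDensity I A {k : ℕ | γ ≤ dist (x k) (x k₀)} 0

/-- The additive property for `A^I`-density zero sets (AP`A^I`O). -/
def APAIO (I : Set (Set ℕ)) (A : ℕ → ℕ → ℝ) : Prop :=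
  ∀ G : ℕ → Set ℕ, Pairwise (Function.onFun Disjoint G) →
    (∀ j, AIDensity I A (G j) 0) →
    ∃ H : ℕ → Set ℕ, (∀ j, (symmDiff (G j) (H j)).Finite) ∧
      AIDensity I A (⋃ j, H j) 0

/-- The set of `A^I`-statistical limit points of `x`: points to which some
subsequence of `x`, indexed by an (automatically infinite) set of indices whose
`A^I`-density is not equal to `0` (nonzero or nonexistent), converges. -/
def AIStatLimitPts {X : Type*} [MetricSpace X] (I : Set (Set ℕ)) (A : ℕ → ℕ → ℝ)
    (x : ℕ → X) : Set X :=
  {ζ : X | ∃ f : ℕ → ℕ, StrictMono f ∧ ¬ AIDensity I A (Set.range f) 0 ∧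
    Tendsto (fun j => x (f j)) atTop (𝓝 ζ)}

/-- The set of `A^I`-statistical cluster points of `x`. -/
def AIStatClusterPts {X : Type*} [MetricSpace X] (I : Set (Set ℕ)) (A : ℕ → ℕ → ℝ)
    (x : ℕ → X) : Set X :=
  {ν : X | ∀ ε > 0, ¬ AIDensity I A {k : ℕ | dist (x k) ν < ε} 0}

/-- The set of ordinary limit points of `x` (limits of subsequences). -/
def LimitPts {X : Type*} [MetricSpace X] (x : ℕ → X) : Set X :=
  {ζ : X | ∃ f : ℕ → ℕ, StrictMono f ∧ Tendsto (fun j => x (f j)) atTop (𝓝 ζ)}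

section Aux

variable {I : Set (Set ℕ)} {A : ℕ → ℕ → ℝ}

lemma ilim_of_tendsto (hI : AdmissibleIdeal I) {t : ℕ → ℝ} {L : ℝ}
    (h : Tendsto t atTop (𝓝 L)) : ILim I t L := by
  intro ε hε
  rw [Metric.tendsto_atTop] at h
  obtain ⟨N, hN⟩ := h ε hε
  apply hI.finite_mem
  apply (Set.finite_Iio N).subset
  intro n hn
  simp only [Set.mem_setOf_eq] at hn
  by_contra hc
  simp only [Set.mem_Iio, not_lt] at hc
  have := hN n hc
  rw [Real.dist_eq] at this
  linarith

lemma ilim_sub (hI : AdmissibleIdeal I) {s t : ℕ → ℝ} {a b : ℝ}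
    (hs : ILim I s a) (ht : ILim I t b) :
    ILim I (fun n => s n - t n) (a - b) := by
  intro ε hε
  refine hI.subset_mem (hI.union_mem (hs (ε/2) (by positivity)) (ht (ε/2) (by positivity))) ?_
  intro n hn
  simp only [Set.mem_setOf_eq, Set.mem_union] at hn ⊢
  by_contra hc
  push_neg at hc
  have h1 : |s n - t n - (a - b)| ≤ |s n - a| + |t n - b| := by
    have : s n - t n - (a - b) = (s n - a) - (t n - b) := by ring
    rw [this]
    exact abs_sub _ _
  linarith [hc.1, hc.2]

lemma ilim_unique (hI : AdmissibleIdeal I) {t : ℕ → ℝ} {a b : ℝ}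
    (ha : ILim I t a) (hb : ILim I t b) : a = b := by
  by_contra h
  have hab : 0 < |a - b| / 2 := by
    have : a - b ≠ 0 := sub_ne_zero.mpr h
    positivity
  apply hI.univ_not_mem
  refine hI.subset_mem (hI.union_mem (ha _ hab) (hb _ hab)) ?_
  intro n _
  simp only [Set.mem_union, Set.mem_setOf_eq]
  by_contra hc
  push_neg at hc
  have : |a - b| ≤ |t n - a| + |t n - b| := by
    have h2 : a - b = -(t n - a) + (t n - b) := by ring
    calc |a - b| = |(-(t n - a)) + (t n - b)| := by rw [← h2]
      _ ≤ |(-(t n - a))| + |t n - b| := abs_add_le _ _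
      _ = |t n - a| + |t n - b| := by rw [abs_neg]
  linarith [hc.1, hc.2]

lemma density_mono_zero (hI : AdmissibleIdeal I) (hA : RegularMatrix A)
    {M N : Set ℕ} (hMN : M ⊆ N) (hN : AIDensity I A N 0) : AIDensity I A M 0 := by
  intro ε hε
  refine hI.subset_mem (hN ε hε) ?_
  intro n hn
  simp only [Set.mem_setOf_eq, sub_zero] at hn ⊢
  have hnn : ∀ k, (0:ℝ) ≤ A n k := hA.nonneg n
  have h1 : 0 ≤ ∑' k, M.indicator (A n) k :=
    tsum_nonneg fun k => Set.indicator_nonneg (fun a _ => hnn a) k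
  have h2 : ∑' k, M.indicator (A n) k ≤ ∑' k, N.indicator (A n) k :=
    Summable.tsum_le_tsum (fun k => Set.indicator_le_indicator_of_subset hMN hnn k)
      ((hA.summable n).indicator M) ((hA.summable n).indicator N)
  rw [abs_of_nonneg h1] at hn
  rw [abs_of_nonneg (h1.trans h2)]
  linarith

lemma density_finite_zero (hI : AdmissibleIdeal I) (hA : RegularMatrix A)
    {F : Set ℕ} (hF : F.Finite) : AIDensity I A F 0 := by
  apply ilim_of_tendsto hI
  have key : ∀ n, ∑' k, F.indicator (A n) k = ∑ k ∈ hF.toFinset, A n k := by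
    intro n
    rw [tsum_eq_sum (s := hF.toFinset) (f := F.indicator (A n))
      (fun b hb => Set.indicator_of_notMem (by simpa using hb) _)]
    apply Finset.sum_congr rfl
    intro k hk
    exact Set.indicator_of_mem (by simpa using hk) _
  simp only [key]
  have := tendsto_finset_sum (f := fun k n => A n k) (x := atTop)
    (a := fun _ => (0:ℝ)) hF.toFinset (fun k _ => hA.col_lim k)
  simpa using this

lemma density_compl_one (hI : AdmissibleIdeal I) (hA : RegularMatrix A)
    {B : Set ℕ} (hB : AIDensity I A B 0) : AIDensity I A Bᶜ 1 := by
  have key : (fun n => ∑' k, Bᶜ.indicator (A n) k)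
      = fun n => (∑' k, A n k) - ∑' k, B.indicator (A n) k := by
    funext n
    rw [← Summable.tsum_sub (hA.summable n) ((hA.summable n).indicator B)]
    congr 1
    funext k
    rw [Set.indicator_compl]
    rfl
  unfold AIDensity
  rw [key]
  have h1 : ILim I (fun n => ∑' k, A n k) 1 := ilim_of_tendsto hI hA.row_sum
  have := ilim_sub hI h1 hB
  simpa using this

end Aux

theorem stmt_7 {X : Type*} [MetricSpace X] (A : ℕ → ℕ → ℝ) (I : Set (Set ℕ))
    (hA : RegularMatrix A) (hI : AdmissibleIdeal I) (hAP : APAIO I A)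
    (x : ℕ → X) (L : X) (hx : AIStatConv I A x L) :
    ∃ f : ℕ → ℕ, StrictMono f ∧ AIDensity I A (Set.range f) 1 ∧
      CauchySeq (fun j => x (f j)) := by
  classical
  set d : ℕ → ℝ := fun k => dist (x k) L with hd
  set G : ℕ → Set ℕ := fun j => match j with
    | 0 => {k | 1 < d k}
    | j+1 => {k | ((j:ℝ)+2)⁻¹ < d k ∧ d k ≤ ((j:ℝ)+1)⁻¹}
    with hG
  have hGdisj : Pairwise (Function.onFun Disjoint G) := by
    have key : ∀ i j, i < j → Disjoint (G i) (G j) := by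
      intro i j hij
      rw [Set.disjoint_left]
      intro k hki hkj
      match i, j with
      | 0, 0 => omega
      | 0, j+1 =>
        simp only [hG, Set.mem_setOf_eq] at hki hkj
        have h1 : ((j:ℝ)+1)⁻¹ ≤ 1 := by
          rw [inv_le_one_iff₀]
          right
          have : (0:ℝ) ≤ (j:ℝ) := Nat.cast_nonneg j
          linarith
        linarith [hkj.2]
      | i+1, j+1 =>
        simp only [hG, Set.mem_setOf_eq] at hki hkj
        have hij' : (i:ℝ) + 2 ≤ (j:ℝ) + 1 := by
          have : i + 2 ≤ j + 1 := by omega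
          exact_mod_cast this
        have : ((j:ℝ)+1)⁻¹ ≤ ((i:ℝ)+2)⁻¹ := by
          apply inv_anti₀ (by positivity) hij'
        linarith [hki.1, hkj.2]
    intro i j hij
    rcases hij.lt_or_gt with h|h
    · exact key i j h
    · exact (key j i h).symm
  have hGzero : ∀ j, AIDensity I A (G j) 0 := by
    intro j
    match j with
    | 0 =>
      refine density_mono_zero hI hA (N := {k | 1 ≤ d k}) ?_ (hx 1 one_pos)
      intro k hk
      have hk' : 1 < d k := hk
      exact le_of_lt hk'
    | j+1 =>
      have hpos : (0:ℝ) < ((j:ℝ)+2)⁻¹ := by positivity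
      refine density_mono_zero hI hA (N := {k | ((j:ℝ)+2)⁻¹ ≤ d k}) ?_ (hx _ hpos)
      intro k hk
      have hk' : ((j:ℝ)+2)⁻¹ < d k ∧ d k ≤ ((j:ℝ)+1)⁻¹ := hk
      exact le_of_lt hk'.1
  obtain ⟨H, hHfin, hHzero⟩ := hAP G hGdisj hGzero
  set B := ⋃ j, H j with hB
  set M := Bᶜ with hM
  have hkey : ∀ ε > 0, (M ∩ {k | ε ≤ d k}).Finite := by
    intro ε hε
    set J := Nat.floor (1/ε) with hJ
    have hcover : M ∩ {k | ε ≤ d k} ⊆ ⋃ j ∈ Finset.range (J+1), (G j \ H j) := by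
      rintro k ⟨hkM, hkd⟩
      simp only [Set.mem_setOf_eq] at hkd
      have hkB : k ∉ B := hkM
      have hGj : ∃ j ≤ J, k ∈ G j := by
        by_cases h1 : 1 < d k
        · exact ⟨0, Nat.zero_le _, h1⟩
        · push_neg at h1
          have hdpos : 0 < d k := lt_of_lt_of_le hε hkd
          set j := Nat.floor (1 / d k) with hj
          have h1' : (1:ℝ) ≤ 1 / d k := by
            rw [le_div_iff₀ hdpos, one_mul]; exact h1
          have hj1 : 1 ≤ j := by
            rw [hj]; exact Nat.le_floor (by exact_mod_cast h1')
          have hjle : (j:ℝ) ≤ 1 / d k := Nat.floor_le (by positivity)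
          have hjlt : 1 / d k < (j:ℝ) + 1 := Nat.lt_floor_add_one _
          have hjJ : j ≤ J := by
            rw [hj, hJ]
            exact Nat.floor_le_floor (one_div_le_one_div_of_le hε hkd)
          clear_value j
          refine ⟨j, hjJ, ?_⟩
          · obtain ⟨j', rfl⟩ : ∃ j', j = j'+1 := ⟨j-1, by omega⟩
            have hcast : ((j'+1 : ℕ):ℝ) = (j':ℝ) + 1 := by push_cast; ring
            rw [hcast] at hjle hjlt
            constructor
            · -- ((j':ℝ)+2)⁻¹ < d k
              have h2 : 1 / d k < (j':ℝ) + 2 := by linarith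
              have h3 : (0:ℝ) < (j':ℝ) + 2 := by positivity
              rw [div_lt_iff₀ hdpos] at h2
              rw [inv_lt_iff_one_lt_mul₀ h3]
              nlinarith
            · -- d k ≤ ((j':ℝ)+1)⁻¹
              have h3 : (0:ℝ) < (j':ℝ) + 1 := by positivity
              rw [le_div_iff₀ hdpos] at hjle
              rw [show ((j':ℝ)+1)⁻¹ = 1/((j':ℝ)+1) from (one_div _).symm, le_div_iff₀ h3]
              nlinarith
      obtain ⟨j, hjJ, hkGj⟩ := hGj
      simp only [Set.mem_iUnion, Finset.mem_range]
      exact ⟨j, by omega, hkGj, fun h => hkB (Set.mem_iUnion.mpr ⟨j, h⟩)⟩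
    apply Set.Finite.subset ?_ hcover
    apply Set.Finite.biUnion (Finset.range (J+1)).finite_toSet
    intro j _
    apply (hHfin j).subset
    intro k hk
    exact Set.mem_symmDiff.mpr (Or.inl ⟨hk.1, hk.2⟩)
  have hBzero : AIDensity I A B 0 := hHzero
  have hMone : AIDensity I A M 1 := density_compl_one hI hA hBzero
  have hMinf : M.Infinite := by
    intro hfin
    have h1 : AIDensity I A Mᶜ 1 := density_compl_one hI hA (density_finite_zero hI hA hfin)
    have h2 : AIDensity I A B 1 := by rwa [hM, compl_compl] at h1
    exact absurd (ilim_unique hI hBzero h2) (by norm_num)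
  have hMinf' : {n | n ∈ M}.Infinite := hMinf
  set f := Nat.nth (· ∈ M) with hf
  have hfmono : StrictMono f := Nat.nth_strictMono hMinf'
  have hfrange : Set.range f = M := Nat.range_nth_of_infinite hMinf'
  refine ⟨f, hfmono, ?_, ?_⟩
  · rw [hfrange]; exact hMone
  · apply Filter.Tendsto.cauchySeq (x := L)
    rw [Metric.tendsto_atTop]
    intro ε hε
    have hfin := hkey ε hε
    have hpre : (f ⁻¹' (M ∩ {k | ε ≤ d k})).Finite :=
      Set.Finite.preimage hfmono.injective.injOn hfin
    obtain ⟨N, hN⟩ := hpre.bddAbove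
    refine ⟨N+1, fun j hj => ?_⟩
    have hfM : f j ∈ M := by rw [← hfrange]; exact Set.mem_range_self j
    by_contra hc
    push_neg at hc
    have hmem : j ∈ f ⁻¹' (M ∩ {k | ε ≤ d k}) := ⟨hfM, hc⟩
    have := hN hmem
    omega
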